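/- Given a Schreier system S = (M, A, Θ, λ), the construction Σ(S) — with objects the elements of M, hom-sets Σ(S)(a,a) = A_a and Σ(S)(a,b) = ∅ for a ≠ b, composition given by group multiplication, tensor product g⊗f = a_*(f)∘b^*(g) on morphisms g : a→a, f : b→b, associativity constraints λ_{a,b,c} : (ab)c → a(bc), unit object 1, and identity unit constraints — is a monoidal groupoid. In particular: (1) the tensor product is a functor; (2) λ_{a,b,c} are natural in all three variables; (3) the pentagon and triangle axioms hold. -/

import Mathlib

/-!
The tensor `g ⊗ f = a_*(f) ∘ b^*(g)` is the non-commutative coproduct of the homomorphisms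
`a_*` and `b^*`, which have commuting images, so it is a homomorphism `A_b × A_a →* A_{ab}`.
Naturality of `λ` says that conjugation by `λ_{a,b,c}` carries `(h ⊗ g) ⊗ f` to `h ⊗ (g ⊗ f)`;
as conjugation is a homomorphism, this reduces to the three conjugation relations, one for each
tensor factor. The pentagon is the cocycle condition and the triangle is a normalization.
-/

/-- Transport along an equality of indices of an indexed family. -/
def fcast {M : Type*} (A : M → Type*) {x y : M} (h : x = y) (v : A x) : A y := h ▸ v

theorem fcast_mul {M : Type*} (A : M → Type*) [∀ a : M, Mul (A a)] {x y : M}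
    (h : x = y) (u v : A x) : fcast A h (u * v) = fcast A h u * fcast A h v := by
  subst h; rfl

theorem lam_conj_tensor_assoc {M : Type*} [Monoid M] (A : M → Type*)
    [∀ a : M, Group (A a)] (push : ∀ a b : M, A b →* A (a * b))
    (pull : ∀ a b : M, A a →* A (a * b)) (lam : ∀ a b c : M, A (a * b * c))
    (hc11 : ∀ (a b c : M) (f : A c),
      lam a b c * push (a * b) c f * (lam a b c)⁻¹
        = fcast A (mul_assoc a b c).symm (push a (b * c) (push b c f)))
    (hc12 : ∀ (a b c : M) (g : A b),
      lam a b c * pull (a * b) c (push a b g) * (lam a b c)⁻¹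
        = fcast A (mul_assoc a b c).symm (push a (b * c) (pull b c g)))
    (hc13 : ∀ (a b c : M) (h : A a),
      lam a b c * pull (a * b) c (pull a b h) * (lam a b c)⁻¹
        = fcast A (mul_assoc a b c).symm (pull a (b * c) h))
    (a b c : M) (h : A a) (g : A b) (f : A c) :
    lam a b c * (push (a * b) c f * pull (a * b) c (push a b g * pull a b h)) * (lam a b c)⁻¹
      = fcast A (mul_assoc a b c).symm
          (push a (b * c) (push b c f * pull b c g) * pull a (b * c) h) := by
  simp only [← MulAut.conj_apply, map_mul, fcast_mul]
  simp only [MulAut.conj_apply, hc11, hc12, hc13, mul_assoc]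

/-- The construction `Σ(S)` from a Schreier system `S = (M, A, Θ, λ)` — objects
the elements of `M`, endomorphisms `A_a`, tensor `g ⊗ f := a_*(f) ∘ b^*(g)`,
associators `λ_{a,b,c}`, unit object `1`, and identity unit constraints — is a
monoidal groupoid.  In particular: (1) the tensor product is functorial;
(2) the associators `λ_{a,b,c}` are natural in all three variables; and
(3) the pentagon and triangle axioms hold. -/
theorem stmt9 {M : Type*} [Monoid M] (A : M → Type*) [∀ a : M, Group (A a)]
    (push : ∀ a b : M, A b →* A (a * b))   -- `a_* : A_b → A_{ab}`
    (pull : ∀ a b : M, A a →* A (a * b))   -- `b^* : A_a → A_{ab}`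
    (lam : ∀ a b c : M, A (a * b * c))
    (hc11 : ∀ (a b c : M) (f : A c),
      lam a b c * push (a * b) c f * (lam a b c)⁻¹
        = fcast A (mul_assoc a b c).symm (push a (b * c) (push b c f)))
    (hc12 : ∀ (a b c : M) (g : A b),
      lam a b c * pull (a * b) c (push a b g) * (lam a b c)⁻¹
        = fcast A (mul_assoc a b c).symm (push a (b * c) (pull b c g)))
    (hc13 : ∀ (a b c : M) (h : A a),
      lam a b c * pull (a * b) c (pull a b h) * (lam a b c)⁻¹
        = fcast A (mul_assoc a b c).symm (pull a (b * c) h))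
    (hc2 : ∀ a b c d : M,
      fcast A (show a * (b * c * d) = a * b * c * d by simp [mul_assoc])
          (push a (b * c * d) (lam b c d))
        * fcast A (show a * (b * c) * d = a * b * c * d by simp [mul_assoc])
          (lam a (b * c) d)
        * pull (a * b * c) d (lam a b c)
      = fcast A (show a * b * (c * d) = a * b * c * d by simp [mul_assoc])
          (lam a b (c * d))
        * lam (a * b) c d)
    (hc3 : ∀ (a b : M) (f : A b) (g : A a),
      push a b f * pull a b g = pull a b g * push a b f)
    (hc4p : ∀ (a : M) (f : A a), push 1 a f = fcast A (one_mul a).symm f)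
    (hc4q : ∀ (a : M) (f : A a), pull a 1 f = fcast A (mul_one a).symm f)
    (hc5a : ∀ a b : M, lam 1 a b = 1)
    (hc5b : ∀ a b : M, lam a 1 b = 1)
    (hc5c : ∀ a b : M, lam a b 1 = 1) :
    -- (1) the tensor product is a functor:
    (∀ (a b : M) (g g' : A a) (f f' : A b),
      push a b (f * f') * pull a b (g * g')
        = (push a b f * pull a b g) * (push a b f' * pull a b g'))
    ∧ (∀ a b : M, push a b (1 : A b) * pull a b (1 : A a) = (1 : A (a * b)))
    -- (2) the associators are natural in all three variables:
    ∧ (∀ (a b c : M) (h : A a) (g : A b) (f : A c),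
      lam a b c * (push (a * b) c f * pull (a * b) c (push a b g * pull a b h))
        = fcast A (mul_assoc a b c).symm
            (push a (b * c) (push b c f * pull b c g) * pull a (b * c) h)
          * lam a b c)
    -- (3) the pentagon axiom:
    ∧ (∀ a b c d : M,
      fcast A (show a * (b * c * d) = a * b * c * d by simp [mul_assoc])
          (push a (b * c * d) (lam b c d))
        * fcast A (show a * (b * c) * d = a * b * c * d by simp [mul_assoc])
          (lam a (b * c) d)
        * pull (a * b * c) d (lam a b c)
      = fcast A (show a * b * (c * d) = a * b * c * d by simp [mul_assoc])
          (lam a b (c * d))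
        * lam (a * b) c d)
    -- and the triangle axiom (with identity unit constraints):
    ∧ (∀ a b : M, lam a 1 b = 1) := by
  refine ⟨?_, fun a b => by simp, ?_, hc2, hc5b⟩
  · intro a b g g' f f'
    exact map_mul ((push a b).noncommCoprod (pull a b) (hc3 a b)) (f, g) (f', g')
  · intro a b c h g f
    exact mul_inv_eq_iff_eq_mul.mp
      (lam_conj_tensor_assoc A push pull lam hc11 hc12 hc13 a b c h g f)
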